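/- If G is a connected finite simple graph with independence number α(G) ≤ 3, then every longest path of G contains every vertex of degree at least Δ(G) − 1. -/

import Mathlib

/-!
Suppose a longest path `P[0] … P[n]` misses a vertex `v` with `deg v ≥ Δ - 1`, and let `K` be the
set of vertices off `P`. Paths are handled as vertex lists; each step below rearranges pieces of `P`
and vertices of `K` into a path that would be longer than `P`.

The ends of `P` have no neighbour in `K` and are not adjacent (else `P` closes into a cycle, which
an attached vertex of `K` reopens into a longer path), so `α ≤ 3` makes `K` a clique. If `x ∈ K`
were adjacent to `P[m]` and `P[m']` with `m < m'`, then insertion, Pósa rotation and crossing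
arguments would make `P[0]`, `P[m+1]`, `P[m'+1]`, `x` independent; so `x` has at most one neighbour
on `P`, and `Δ ≤ deg v + 1 ≤ |K| + 1`.

Take `w ∈ K` adjacent to `P[i]`. A path can enter the clique `K` at any vertex and sweep all of it,
so `|K| ≤ i ≤ n - |K|` and other vertices of `K` have no neighbours on `P` close to `P[i]`. As
`P[i]` has at most `|K|` neighbours on `P`, counting yields non-neighbours `P[j]`, `P[m]` of `P[i]`
with `j < i < m` and `j + m ≤ i + |K|`, and some `u ∈ K` adjacent to none of `P[i]`, `P[j]`,
`P[m]`. Then `α ≤ 3` forces the chord `P[j] P[m]`, and `P[n] … P[m] P[j] … P[i] w`, followed by the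
rest of `K`, is longer than `P`.
-/

open SimpleGraph

/-- `p` is a longest path in the graph `G`. -/
def IsLongestPath {V : Type} (G : SimpleGraph V) {u v : V} (p : G.Walk u v) : Prop :=
  p.IsPath ∧ ∀ (a b : V) (q : G.Walk a b), q.IsPath → q.length ≤ p.length

open Finset

theorem Finset.exists_mem_Ico_notMem (D : Finset ℕ) {a b : ℕ} (h : #(D ∩ Ico a b) < b - a) :
    ∃ j ∈ Ico a (a + #(D ∩ Ico a b) + 1), j ∉ D := by
  obtain ⟨j, hj, hjD⟩ := exists_mem_notMem_of_card_lt_card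
    (t := Ico a (a + #(D ∩ Ico a b) + 1)) (s := D ∩ Ico a b) (by simp; omega)
  refine ⟨j, hj, fun hjD' => hjD (mem_inter.2 ⟨hjD', ?_⟩)⟩
  simp only [mem_Ico] at hj ⊢
  omega

theorem Finset.exists_notMem_add_le {D : Finset ℕ} {i k n : ℕ} (hpred : i - 1 ∈ D)
    (hsucc : i + 1 ∈ D) (hD : #D ≤ k) (hki : k ≤ i) (hkn : i + k < n) :
    ∃ j m, j < i ∧ i < m ∧ m < n ∧ j ∉ D ∧ m ∉ D ∧ j + m ≤ i + k := by
  have hD2 : 2 ≤ #D := one_lt_card.2 ⟨_, hpred, _, hsucc, by omega⟩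
  have hsplit : #(D ∩ Ico 0 (i - 1)) + #(D ∩ Ico (i + 2) n) + 2 ≤ #D := by
    have hsub : D ∩ Ico 0 (i - 1) ∪ D ∩ Ico (i + 2) n ⊆ (D.erase (i - 1)).erase (i + 1) := by
      intro t
      simp only [mem_union, mem_inter, mem_Ico, mem_erase]
      rintro (⟨ht, _⟩ | ⟨ht, _⟩) <;> exact ⟨by omega, by omega, ht⟩
    have hdisj : Disjoint (D ∩ Ico 0 (i - 1)) (D ∩ Ico (i + 2) n) := by
      rw [disjoint_left]
      intro t
      simp only [mem_inter, mem_Ico]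
      omega
    have := card_le_card hsub
    rw [card_union_of_disjoint hdisj, card_erase_of_mem (mem_erase.2 ⟨by omega, hsucc⟩),
      card_erase_of_mem hpred] at this
    omega
  obtain ⟨j, hj, hjD⟩ := exists_mem_Ico_notMem D (a := 0) (b := i - 1) (by omega)
  obtain ⟨m, hm, hmD⟩ := exists_mem_Ico_notMem D (a := i + 2) (b := n) (by omega)
  simp only [mem_Ico] at hj hm
  exact ⟨j, m, by omega, by omega, by omega, hjD, hmD, by omega⟩

theorem List.getElem_ne_of_notMem {α : Type*} {l : List α} {x : α} (hx : x ∉ l) {i : ℕ}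
    (hi : i < l.length) : l[i] ≠ x :=
  fun h => hx (h ▸ getElem_mem hi)

namespace SimpleGraph

variable {V : Type*} {G : SimpleGraph V}

def IsWalkList (G : SimpleGraph V) (a b : V) (l : List V) : Prop :=
  l.IsChain G.Adj ∧ l.head? = some a ∧ l.getLast? = some b

namespace IsWalkList

variable {a b c d : V} {l l₁ l₂ : List V}

theorem singleton (a : V) : G.IsWalkList a a [a] := ⟨.singleton a, rfl, rfl⟩

theorem append (h₁ : G.IsWalkList a b l₁) (h₂ : G.IsWalkList c d l₂) (hbc : G.Adj b c) :
    G.IsWalkList a d (l₁ ++ l₂) :=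
  ⟨h₁.1.append h₂.1 (by simp [h₁.2.2, h₂.2.1, hbc]), by simp [h₁.2.1], by simp [h₂.2.2]⟩

theorem reverse (h : G.IsWalkList a b l) : G.IsWalkList b a l.reverse :=
  ⟨List.isChain_reverse.2 <| h.1.imp fun _ _ h => h.symm, by simp [h.2.2], by simp [h.2.1]⟩

end IsWalkList

section Segments

variable {L : List V}

theorem isWalkList_drop_take (hL : L.IsChain G.Adj) {i j : ℕ} (hji : j ≤ i)
    (hi : i < L.length) : G.IsWalkList L[j] L[i] ((L.take (i + 1)).drop j) := by
  refine ⟨(hL.take _).drop _, ?_, ?_⟩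
  · simp [Nat.lt_succ_of_le hji, List.getElem?_eq_getElem (hji.trans_lt hi)]
  · rw [List.getLast?_drop, if_neg (by simp; omega)]
    simp [List.getLast?_take, List.getElem?_eq_getElem hi]

theorem isWalkList_take (hL : L.IsChain G.Adj) {i : ℕ} (hi : i < L.length) :
    G.IsWalkList L[0] L[i] (L.take (i + 1)) :=
  isWalkList_drop_take hL i.zero_le hi

theorem isWalkList_drop (hL : L.IsChain G.Adj) {j : ℕ} (hj : j < L.length) :
    G.IsWalkList L[j] L[L.length - 1] (L.drop j) := by
  simpa [show L.length - 1 + 1 = L.length by omega] using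
    isWalkList_drop_take hL (by omega : j ≤ L.length - 1) (by omega)

end Segments

theorem IsClique.isChain_of_nodup {K : Set V} (hK : G.IsClique K) {l : List V} (hl : l.Nodup)
    (hlK : ∀ x ∈ l, x ∈ K) : l.IsChain G.Adj :=
  (hl.pairwise_of_forall_ne fun x hx y hy hxy => hK (hlK x hx) (hlK y hy) hxy).isChain

theorem IsClique.exists_isWalkList [DecidableEq V] {K : Finset V}
    (hK : G.IsClique (K : Set V)) {u : V} (hu : u ∈ K) :
    ∃ a l, G.IsWalkList u a l ∧ l.Nodup ∧ l.toFinset = K := by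
  have hnd : (u :: (K.erase u).toList).Nodup := by simp [Finset.nodup_toList]
  have hto : (u :: (K.erase u).toList).toFinset = K := by simp [Finset.insert_erase hu]
  exact ⟨_, _, ⟨hK.isChain_of_nodup hnd fun x hx => hto ▸ List.mem_toFinset.2 hx, rfl,
    List.getLast?_eq_some_getLast (List.cons_ne_nil _ _)⟩, hnd, hto⟩

theorem IsClique.exists_isWalkList_of_ne [DecidableEq V] {K : Finset V}
    (hK : G.IsClique (K : Set V)) {u u' : V} (hu : u ∈ K) (hu' : u' ∈ K) (hne : u ≠ u') :
    ∃ l, G.IsWalkList u u' l ∧ l.Nodup ∧ l.toFinset = K := by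
  obtain ⟨a, l, hl, hnd, hto⟩ := (hK.subset (by simp)).exists_isWalkList
    (Finset.mem_erase.2 ⟨hne.symm, hu'⟩)
  have ha : a ∈ K.erase u := hto ▸ List.mem_toFinset.2 (List.mem_of_getLast? hl.2.2)
  refine ⟨[u] ++ l.reverse, (IsWalkList.singleton u).append hl.reverse
    (hK hu (Finset.mem_of_mem_erase ha) (Finset.ne_of_mem_erase ha).symm), ?_, ?_⟩
  · have : u ∉ l := fun h => by simpa [hto] using List.mem_toFinset.2 h
    simpa [hnd] using this
  · simp [hto, Finset.insert_erase hu]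

theorem length_le_of_pairwise_not_adj {k : ℕ}
    (hα : ∀ s : Finset V, G.IsIndepSet (s : Set V) → #s ≤ k) {l : List V} (hnd : l.Nodup)
    (hl : l.Pairwise fun x y => ¬ G.Adj x y) : l.length ≤ k := by
  classical
  have : Std.Symm fun x y => ¬ G.Adj x y := ⟨fun _ _ h h' => h h'.symm⟩
  rw [← List.toFinset_card_of_nodup hnd]
  exact hα _ fun x hx y hy hxy => hl.forall (by simpa using hx) (by simpa using hy) hxy

theorem Connected.exists_adj_getElem (hconn : G.Connected) {L : List V} {v : V} (hv : v ∉ L)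
    (hL : 0 < L.length) : ∃ w ∉ L, ∃ i, ∃ hi : i < L.length, G.Adj w L[i] := by
  obtain ⟨d, -, hd, hd'⟩ :=
    (hconn.preconnected v L[0]).some.exists_boundary_dart {x | x ∉ L} hv (by simp)
  obtain ⟨i, hi, e⟩ := List.mem_iff_getElem.1 (not_not.1 hd')
  exact ⟨d.fst, hd, i, hi, e ▸ d.adj⟩

structure IsLongestPathList (G : SimpleGraph V) (L : List V) : Prop where
  isChain : L.IsChain G.Adj
  nodup : L.Nodup
  length_le : ∀ ⦃l : List V⦄, l.IsChain G.Adj → l.Nodup → l.length ≤ L.length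

end SimpleGraph

theorem IsLongestPath.isLongestPathList_support {V : Type} {G : SimpleGraph V} {a b : V}
    {p : G.Walk a b} (hp : IsLongestPath G p) : G.IsLongestPathList p.support where
  isChain := p.isChain_adj_support
  nodup := hp.1.support_nodup
  length_le l hl hnd := by
    rcases eq_or_ne l [] with rfl | hne
    · simp
    have := hp.2 _ _ (Walk.ofSupport l hne hl) (by simpa [Walk.isPath_def] using hnd)
    simp only [Walk.length_ofSupport] at this
    have := p.length_support
    omega

namespace SimpleGraph.IsLongestPathList

variable {V : Type*} {G : SimpleGraph V} {L : List V}

theorem length_add_length_le (hL : G.IsLongestPathList L) {l l₁ l₂ : List V}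
    (hl : l.IsChain G.Adj) (hperm : l.Perm (l₁ ++ l₂)) (h₁ : l₁.Sublist L) (h₂ : l₂.Nodup)
    (hout : ∀ x ∈ l₂, x ∉ L) : l₁.length + l₂.length ≤ L.length := by
  have hnd : l.Nodup := hperm.nodup_iff.2 <| List.nodup_append.2
    ⟨h₁.nodup hL.nodup, h₂, fun x hx y hy hxy => hout y hy (hxy ▸ h₁.subset hx)⟩
  simpa [hperm.length_eq] using hL.length_le hl hnd

theorem reverse (hL : G.IsLongestPathList L) : G.IsLongestPathList L.reverse where
  isChain := List.isChain_reverse.2 <| hL.isChain.imp fun _ _ h => h.symm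
  nodup := List.nodup_reverse.2 hL.nodup
  length_le l hl hnd := by simpa using hL.length_le hl hnd

theorem not_isChain_of_perm_cons (hL : G.IsLongestPathList L) {x : V} (hx : x ∉ L)
    {l : List V} (hperm : l.Perm (x :: L)) : ¬ l.IsChain G.Adj := fun hl => by
  simpa using hL.length_add_length_le hl (hperm.trans (List.perm_append_singleton x L).symm)
    (List.Sublist.refl L) (List.nodup_singleton x) (by simpa using hx)

theorem not_adj_getElem_zero (hL : G.IsLongestPathList L) {x : V} (hx : x ∉ L)
    (h : 0 < L.length) : ¬ G.Adj x L[0] := fun hadj =>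
  hL.not_isChain_of_perm_cons hx (List.Perm.refl _)
    ((IsWalkList.singleton x).append (isWalkList_drop hL.isChain h) hadj).1

theorem not_adj_getElem_length_sub_one (hL : G.IsLongestPathList L) {x : V} (hx : x ∉ L)
    (h : 0 < L.length) : ¬ G.Adj x L[L.length - 1] := by
  have := hL.reverse.not_adj_getElem_zero (x := x) (by simpa using hx) (by simpa using h)
  rwa [List.getElem_reverse] at this

theorem not_adj_succ_of_adj (hL : G.IsLongestPathList L) {x : V} (hx : x ∉ L) {m : ℕ}
    (hm : m + 1 < L.length) (h : G.Adj x L[m]) : ¬ G.Adj x L[m + 1] := fun h' =>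
  hL.not_isChain_of_perm_cons hx (l := L.take (m + 1) ++ x :: L.drop (m + 1))
    (List.perm_middle.trans (.cons x (.of_eq (List.take_append_drop _ _))))
    ((isWalkList_take hL.isChain (by omega)).append
      ((IsWalkList.singleton x).append (isWalkList_drop hL.isChain hm) h') h.symm).1

theorem not_adj_getElem_zero_succ_of_adj (hL : G.IsLongestPathList L) {x : V} (hx : x ∉ L)
    {m : ℕ} (hm : m + 1 < L.length) (hxm : G.Adj x L[m]) : ¬ G.Adj L[0] L[m + 1] := fun h =>
  hL.not_isChain_of_perm_cons hx (l := [x] ++ ((L.take (m + 1)).reverse ++ L.drop (m + 1)))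
    ((((List.reverse_perm _).append_right _).trans (by rw [List.take_append_drop])).cons x)
    ((IsWalkList.singleton x).append ((isWalkList_take hL.isChain (by omega)).reverse.append
      (isWalkList_drop hL.isChain hm) h) hxm).1

theorem not_adj_getElem_zero_getElem_length_sub_one (hL : G.IsLongestPathList L) {x : V}
    (hx : x ∉ L) {m : ℕ} (hm : m < L.length) (hxm : G.Adj x L[m]) :
    ¬ G.Adj L[0] L[L.length - 1] := fun h => by
  cases m with
  | zero => exact hL.not_adj_getElem_zero hx hm hxm
  | succ k =>
    exact hL.not_isChain_of_perm_cons hx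
      ((List.perm_append_comm.trans (.of_eq (List.take_append_drop _ _))).cons x)
      ((IsWalkList.singleton x).append ((isWalkList_drop hL.isChain hm).append
      (isWalkList_take hL.isChain (by omega)) h.symm) hxm).1

theorem not_adj_succ_of_adj_of_adj (hL : G.IsLongestPathList L) {x : V} (hx : x ∉ L)
    {m m' : ℕ} (hmm' : m < m') (hm' : m' + 1 < L.length) (h : G.Adj x L[m]) (h' : G.Adj x L[m']) :
    ¬ G.Adj L[m + 1] L[m' + 1] := fun hcross => by
  have hsplit : L.take (m + 1) ++ ((L.take (m' + 1)).drop (m + 1) ++ L.drop (m' + 1)) = L := by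
    rw [show L.take (m + 1) = (L.take (m' + 1)).take (m + 1) by
      rw [List.take_take]; congr; omega, ← List.append_assoc, List.take_append_drop,
      List.take_append_drop]
  refine hL.not_isChain_of_perm_cons hx
    (l := L.take (m + 1) ++ x :: (((L.take (m' + 1)).drop (m + 1)).reverse ++ L.drop (m' + 1)))
    (List.perm_middle.trans <| .cons x <|
      (((List.reverse_perm _).append_right _).append_left _).trans (.of_eq hsplit))
    ((isWalkList_take hL.isChain (by omega)).append ((IsWalkList.singleton x).append
      ((isWalkList_drop_take hL.isChain hmm' (by omega)).reverse.append
        (isWalkList_drop hL.isChain hm') hcross) h') h.symm).1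

section Clique

variable [DecidableEq V] {K : Finset V}

theorem length_add_card_le (hL : G.IsLongestPathList L) (hKL : ∀ x ∈ K, x ∉ L)
    {l l₁ c : List V} (hl : l.IsChain G.Adj) (hperm : l.Perm (l₁ ++ c)) (h₁ : l₁.Sublist L)
    (hc : c.Nodup) (hcK : c.toFinset = K) : l₁.length + #K ≤ L.length := by
  simpa [← hcK, List.toFinset_card_of_nodup hc] using
    hL.length_add_length_le hl hperm h₁ hc (by simpa [← hcK] using hKL)

theorem card_le_of_adj (hL : G.IsLongestPathList L) (hK : G.IsClique (K : Set V))
    (hKL : ∀ x ∈ K, x ∉ L) {u : V} (hu : u ∈ K) {m : ℕ} (hm : m < L.length)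
    (h : G.Adj u L[m]) : #K ≤ m := by
  obtain ⟨a, c, hc, hnd, hcK⟩ := hK.exists_isWalkList hu
  have := hL.length_add_card_le hKL (hc.reverse.append (isWalkList_drop hL.isChain hm) h).1
    List.perm_append_comm (List.drop_sublist _ _) (List.nodup_reverse.2 hnd) (by simpa using hcK)
  simp only [List.length_drop] at this
  omega

theorem add_card_lt_of_adj (hL : G.IsLongestPathList L) (hK : G.IsClique (K : Set V))
    (hKL : ∀ x ∈ K, x ∉ L) {u : V} (hu : u ∈ K) {m : ℕ} (hm : m < L.length)
    (h : G.Adj u L[m]) : m + #K < L.length := by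
  obtain ⟨a, c, hc, hnd, hcK⟩ := hK.exists_isWalkList hu
  have := hL.length_add_card_le hKL ((isWalkList_take hL.isChain hm).append hc h.symm).1
    (.refl _) (List.take_sublist _ _) hnd hcK
  simp only [List.length_take] at this
  omega

theorem add_card_lt_of_adj_of_adj (hL : G.IsLongestPathList L) (hK : G.IsClique (K : Set V))
    (hKL : ∀ x ∈ K, x ∉ L) {u u' : V} (hu : u ∈ K) (hu' : u' ∈ K) (hne : u ≠ u') {m m' : ℕ}
    (hmm' : m < m') (hm' : m' < L.length) (h : G.Adj u L[m]) (h' : G.Adj u' L[m']) :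
    m + #K < m' := by
  obtain ⟨c, hc, hnd, hcK⟩ := hK.exists_isWalkList_of_ne hu hu' hne
  have hsub : (L.take (m + 1) ++ L.drop m').Sublist L := by
    simpa using (List.take_sublist_take_left (l := L) (by omega : m + 1 ≤ m')).append
      (.refl (L.drop m'))
  have := hL.length_add_card_le hKL ((isWalkList_take hL.isChain (by omega)).append
      (hc.append (isWalkList_drop hL.isChain hm') h') h.symm).1
    ((List.perm_append_comm.append_left _).trans (.of_eq (List.append_assoc _ _ _).symm))
    hsub hnd hcK
  simp only [List.length_append, List.length_take, List.length_drop] at this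
  omega

theorem add_card_lt_add_of_adj_of_adj (hL : G.IsLongestPathList L)
    (hK : G.IsClique (K : Set V)) (hKL : ∀ x ∈ K, x ∉ L) {w : V} (hw : w ∈ K) {i j m : ℕ}
    (hji : j ≤ i) (him : i < m) (hm : m < L.length) (h : G.Adj w L[i]) (h' : G.Adj L[j] L[m]) :
    i + #K < m + j := by
  obtain ⟨a, c, hc, hnd, hcK⟩ := hK.exists_isWalkList hw
  have hsub : ((L.take (i + 1)).drop j ++ L.drop m).Sublist L := by
    simpa using ((List.drop_sublist j _).trans
      (List.take_sublist_take_left (l := L) (by omega : i + 1 ≤ m))).append (.refl (L.drop m))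
  have := hL.length_add_card_le hKL ((isWalkList_drop hL.isChain hm).reverse.append
      ((isWalkList_drop_take hL.isChain hji (by omega)).append hc h.symm) h'.symm).1
    ((((List.reverse_perm _).append_right _).trans (List.perm_append_comm_assoc _ _ _)).trans
      (.of_eq (List.append_assoc _ _ _).symm))
    hsub hnd hcK
  simp only [List.length_append, List.length_take, List.length_drop] at this
  omega

end Clique

theorem isClique_compl (hα : ∀ s : Finset V, G.IsIndepSet (s : Set V) → #s ≤ 3)
    (hL : G.IsLongestPathList L) {w : V} (hw : w ∉ L) {i : ℕ} (hi : i < L.length)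
    (h : G.Adj w L[i]) : G.IsClique {x | x ∉ L} := by
  have hn : 0 < L.length := by omega
  have hi0 : i ≠ 0 := by rintro rfl; exact hL.not_adj_getElem_zero hw hn h
  have hne : L[0] ≠ L[L.length - 1] := by rw [Ne, hL.nodup.getElem_inj_iff]; omega
  intro x (hx : x ∉ L) y (hy : y ∉ L) hxy
  by_contra hxy'
  have := length_le_of_pairwise_not_adj hα (l := [L[0], L[L.length - 1], x, y])
    (by simp [hne, hxy, List.getElem_ne_of_notMem hx, List.getElem_ne_of_notMem hy])
    (by simp [hL.not_adj_getElem_zero_getElem_length_sub_one hw hi h, hxy', G.adj_comm _ x,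
      G.adj_comm _ y, hL.not_adj_getElem_zero hx hn, hL.not_adj_getElem_length_sub_one hx hn,
      hL.not_adj_getElem_zero hy hn, hL.not_adj_getElem_length_sub_one hy hn])
  simp at this

theorem not_adj_of_adj_of_lt (hα : ∀ s : Finset V, G.IsIndepSet (s : Set V) → #s ≤ 3)
    (hL : G.IsLongestPathList L) {x : V} (hx : x ∉ L) {m m' : ℕ} (hmm' : m < m')
    (hm' : m' < L.length) (h : G.Adj x L[m]) : ¬ G.Adj x L[m'] := fun h' => by
  have hm'1 : m' + 1 < L.length := by
    by_contra hc
    exact hL.not_adj_getElem_length_sub_one hx (by omega)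
      (by simpa [show m' = L.length - 1 by omega] using h')
  have := length_le_of_pairwise_not_adj hα (l := [L[0], L[m + 1], L[m' + 1], x])
    (by simp [hL.nodup.getElem_inj_iff, List.getElem_ne_of_notMem hx]; omega)
    (by simp [G.adj_comm _ x, hL.not_adj_getElem_zero hx,
      hL.not_adj_getElem_zero_succ_of_adj hx (by omega) h,
      hL.not_adj_getElem_zero_succ_of_adj hx hm'1 h',
      hL.not_adj_succ_of_adj_of_adj hx hmm' hm'1 h h',
      hL.not_adj_succ_of_adj hx (by omega) h, hL.not_adj_succ_of_adj hx hm'1 h'])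
  simp at this

theorem degree_le_card [Fintype V] [DecidableRel G.Adj] [DecidableEq V]
    (hα : ∀ s : Finset V, G.IsIndepSet (s : Set V) → #s ≤ 3) (hL : G.IsLongestPathList L)
    {K : Finset V} (hK : ∀ x, x ∈ K ↔ x ∉ L) {v : V} (hv : v ∈ K) : G.degree v ≤ #K := by
  have hon : #{x ∈ G.neighborFinset v | x ∈ L} ≤ 1 := by
    refine card_le_one.2 fun y hy z hz => ?_
    simp only [mem_filter, mem_neighborFinset, List.mem_iff_getElem] at hy hz
    obtain ⟨hvy, i, hi, rfl⟩ := hy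
    obtain ⟨hvz, j, hj, rfl⟩ := hz
    have hvL := (hK v).1 hv
    rw [hL.nodup.getElem_inj_iff]
    exact le_antisymm (not_lt.1 fun hlt => hL.not_adj_of_adj_of_lt hα hvL hlt hi hvz hvy)
      (not_lt.1 fun hlt => hL.not_adj_of_adj_of_lt hα hvL hlt hj hvy hvz)
  have hoff : {x ∈ G.neighborFinset v | x ∉ L} ⊆ K.erase v := fun x hx => by
    simp only [mem_filter, mem_neighborFinset] at hx
    exact mem_erase.2 ⟨hx.1.ne', (hK x).2 hx.2⟩
  have := card_le_card hoff
  rw [card_erase_of_mem hv] at this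
  rw [← card_neighborFinset_eq_degree, ← card_filter_add_card_filter_not (· ∈ L)]
  have := card_pos.2 ⟨v, hv⟩
  omega

theorem length_pos [Nonempty V] (hL : G.IsLongestPathList L) : 0 < L.length :=
  hL.length_le (.singleton (Classical.arbitrary V)) (List.nodup_singleton _)

theorem adj_getElem_succ (hL : G.IsLongestPathList L) {i : ℕ} (hi : i + 1 < L.length) :
    G.Adj L[i] L[i + 1] :=
  List.isChain_iff_getElem.1 hL.isChain i hi

theorem adj_getElem_sub_one (hL : G.IsLongestPathList L) {i : ℕ} (hi0 : 0 < i)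
    (hi : i < L.length) : G.Adj L[i] L[i - 1] := by
  simpa [Nat.sub_add_cancel hi0] using (hL.adj_getElem_succ (i := i - 1) (by omega)).symm

section Degree

variable [Fintype V] [DecidableRel G.Adj] [DecidableEq V] {K : Finset V}

theorem exists_mem_not_adj (hL : G.IsLongestPathList L) (hK : ∀ x, x ∈ K ↔ x ∉ L) {i : ℕ}
    (hi0 : 0 < i) (hi : i + 1 < L.length) (hdeg : G.degree L[i] ≤ #K + 1) :
    ∃ u ∈ K, ¬ G.Adj u L[i] := by
  by_contra! hall
  have hsub : insert L[i - 1] (insert L[i + 1] K) ⊆ G.neighborFinset L[i] := by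
    simpa [insert_subset_iff, hL.adj_getElem_sub_one hi0 (by omega), hL.adj_getElem_succ hi,
      subset_iff] using fun u hu => (hall u hu).symm
  have := card_le_card hsub
  rw [card_insert_of_notMem, card_insert_of_notMem, card_neighborFinset_eq_degree] at this
  · omega
  · simp [hK]
  · simp [hK, hL.nodup.getElem_inj_iff]

theorem exists_not_adj_add_le (hL : G.IsLongestPathList L) (hK : ∀ x, x ∈ K ↔ x ∉ L) {w : V}
    (hw : w ∈ K) {i : ℕ} (hi : i < L.length) (h : G.Adj w L[i])
    (hdeg : G.degree L[i] ≤ #K + 1) (hKi : #K ≤ i) (hiK : i + #K < L.length) :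
    ∃ j m, ∃ (_ : j < i) (_ : i < m) (_ : m < L.length),
      j + m ≤ i + #K ∧ ¬ G.Adj L[i] L[j] ∧ ¬ G.Adj L[i] L[m] := by
  set N := {y ∈ G.neighborFinset L[i] | y ∈ L}
  have hN : #N ≤ #K := by
    have : N ⊂ G.neighborFinset L[i] :=
      filter_ssubset.2 ⟨w, by simpa using h.symm, (hK w).1 hw⟩
    have := card_lt_card this
    rw [card_neighborFinset_eq_degree] at this
    omega
  have hD : ∀ t (ht : t < L.length), G.Adj L[i] L[t] → t ∈ N.image L.idxOf := fun t ht e =>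
    mem_image.2 ⟨L[t], by simp [N, e], hL.nodup.idxOf_getElem t ht⟩
  have hK0 : 0 < #K := card_pos.2 ⟨w, hw⟩
  obtain ⟨j, m, hji, him, hm, hjD, hmD, hjm⟩ := exists_notMem_add_le
    (hD (i - 1) (by omega) (hL.adj_getElem_sub_one (by omega) hi))
    (hD (i + 1) (by omega) (hL.adj_getElem_succ (by omega))) (card_image_le.trans hN) hKi hiK
  exact ⟨j, m, hji, him, hm, hjm, fun e => hjD (hD j _ e), fun e => hmD (hD m _ e)⟩

theorem not_adj_getElem_of_maxDegree_le (hα : ∀ s : Finset V, G.IsIndepSet (s : Set V) → #s ≤ 3)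
    (hL : G.IsLongestPathList L) (hK : ∀ x, x ∈ K ↔ x ∉ L) (hΔ : G.maxDegree ≤ #K + 1)
    {w : V} (hwK : w ∈ K) {i : ℕ} (hi : i < L.length) : ¬ G.Adj w L[i] := fun h => by
  have hKL : ∀ x ∈ K, x ∉ L := fun x => (hK x).1
  have hKc : G.IsClique (K : Set V) := by
    rw [show (K : Set V) = {x | x ∉ L} from Set.ext hK]
    exact hL.isClique_compl hα (hKL w hwK) hi h
  have hK0 : 0 < #K := card_pos.2 ⟨w, hwK⟩
  have hdeg : G.degree L[i] ≤ #K + 1 := (G.degree_le_maxDegree _).trans hΔ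
  have hKi := hL.card_le_of_adj hKc hKL hwK hi h
  have hiK := hL.add_card_lt_of_adj hKc hKL hwK hi h
  obtain ⟨u, huK, hu⟩ := hL.exists_mem_not_adj hK (by omega) (by omega) hdeg
  obtain ⟨j, m, hji, him, hm, hjm, hj, hm'⟩ :=
    hL.exists_not_adj_add_le hK hwK hi h hdeg hKi hiK
  have huj : ¬ G.Adj u L[j] := fun e => by
    have := hL.card_le_of_adj hKc hKL huK (by omega) e
    omega
  have hum : ¬ G.Adj u L[m] := fun e => by
    have := hL.add_card_lt_of_adj_of_adj hKc hKL hwK huK (by rintro rfl; exact hu h) him hm h e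
    omega
  have hjm' : G.Adj L[j] L[m] := by
    by_contra hjm'
    have := length_le_of_pairwise_not_adj hα (l := [L[i], L[j], L[m], u])
      (by simp [hL.nodup.getElem_inj_iff, List.getElem_ne_of_notMem (hKL u huK)]; omega)
      (by simp [G.adj_comm _ u, hj, hm', hu, huj, hum, hjm'])
    simp at this
  have := hL.add_card_lt_add_of_adj_of_adj hKc hKL hwK hji.le him hm h hjm'
  omega

theorem mem_of_maxDegree_sub_one_le_degree
    (hα : ∀ s : Finset V, G.IsIndepSet (s : Set V) → #s ≤ 3) (hconn : G.Connected)
    (hL : G.IsLongestPathList L) {v : V} (hv : G.maxDegree - 1 ≤ G.degree v) : v ∈ L := by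
  by_contra hvL
  set K : Finset V := {x | x ∉ L}
  have hK : ∀ x, x ∈ K ↔ x ∉ L := by simp [K]
  have : Nonempty V := ⟨v⟩
  obtain ⟨w, hw, i, hi, h⟩ := hconn.exists_adj_getElem hvL hL.length_pos
  have hΔ : G.maxDegree ≤ #K + 1 := by
    have := hL.degree_le_card hα hK ((hK v).2 hvL)
    omega
  exact hL.not_adj_getElem_of_maxDegree_le hα hK hΔ ((hK w).2 hw) hi h

end Degree

end SimpleGraph.IsLongestPathList

/-- If `G` is connected with independence number at most `3`, then every longest
path of `G` contains every vertex of degree at least `Δ(G) - 1`. -/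
theorem longest_path_contains_near_max_degree_of_alpha_le_three
    {V : Type} [Fintype V] (G : SimpleGraph V) [DecidableRel G.Adj]
    (hconn : G.Connected)
    (hα : ∀ s : Finset V, (∀ a ∈ s, ∀ b ∈ s, a ≠ b → ¬ G.Adj a b) → s.card ≤ 3)
    (v : V) (hv : G.maxDegree - 1 ≤ G.degree v)
    {a b : V} (p : G.Walk a b) (hp : IsLongestPath G p) :
    v ∈ p.support := by
  classical
  exact hp.isLongestPathList_support.mem_of_maxDegree_sub_one_le_degree hα hconn hv
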